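/- arXiv:2109.03350 — 6 statements merged into one kernel-verified Lean document; each statement's English description precedes it below -/
import Mathlib

section
/- Let n ≥ 1, let V be a real n×n symmetric matrix with V·𝟏 = 𝟏 (where 𝟏 is the all-ones vector), and let λ ≥ 0 be such that ‖(V − (1/n)𝟏𝟏ᵀ)x‖ ≤ λ‖x‖ for every x ∈ ℝⁿ. Let w̃₁, …, w̃ₙ ∈ ℝ^M be the rows of a matrix W̃ ∈ ℝ^{n×M}, let Γ be a natural number, let W = V^Γ W̃, and let w̄ = (1/n)∑_{j=1}^n w̃_j. Then for every i ∈ {1,…,n}, the i-th row W_i of W satisfies ‖W_i − w̄‖ ≤ λ^Γ √n · max_{j,j'} ‖w̃_j − w̃_{j'}‖ (Euclidean norms). -/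
open scoped BigOperators

noncomputable def nE {k : ℕ} (x : Fin k → ℝ) : ℝ :=
  ‖(WithLp.equiv 2 (Fin k → ℝ)).symm x‖
lemma nE_eq {k : ℕ} (x : Fin k → ℝ) : nE x = Real.sqrt (∑ j, (x j)^2) := by
  rw [nE, EuclideanSpace.norm_eq]
  congr 1
  exact Finset.sum_congr rfl fun j _ => by rw [Real.norm_eq_abs, sq_abs]; rfl
lemma nE_nonneg {k : ℕ} (x : Fin k → ℝ) : 0 ≤ nE x := norm_nonneg _
lemma nE_sq {k : ℕ} (x : Fin k → ℝ) : nE x ^ 2 = ∑ j, (x j)^2 := by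
  rw [nE_eq, Real.sq_sqrt]; positivity
lemma nE_smul {k : ℕ} (c : ℝ) (x : Fin k → ℝ) : nE (c • x) = |c| * nE x := by
  rw [nE, nE, show ((WithLp.equiv 2 (Fin k → ℝ)).symm (c • x)) = c • (WithLp.equiv 2 (Fin k → ℝ)).symm x from rfl,
    norm_smul, Real.norm_eq_abs]
lemma nE_sum_le {k : ℕ} {α : Type*} (s : Finset α) (f : α → Fin k → ℝ) :
    nE (∑ j ∈ s, f j) ≤ ∑ j ∈ s, nE (f j) := by
  rw [nE, show ((WithLp.equiv 2 (Fin k → ℝ)).symm (∑ j ∈ s, f j)) = ∑ j ∈ s, (WithLp.equiv 2 (Fin k → ℝ)).symm (f j) from map_sum (WithLp.linearEquiv 2 ℝ (Fin k → ℝ)).symm f s]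
  exact norm_sum_le _ _
lemma pow_mulVec_bound {n : ℕ} (D : Matrix (Fin n) (Fin n) ℝ) (lam : ℝ) (hlam : 0 ≤ lam)
    (h : ∀ x, nE (D.mulVec x) ≤ lam * nE x) (Γ : ℕ) (x : Fin n → ℝ) :
    nE ((D ^ Γ).mulVec x) ≤ lam ^ Γ * nE x := by
  induction Γ with
  | zero => simp [Matrix.one_mulVec]
  | succ k ih =>
    rw [pow_succ', ← Matrix.mulVec_mulVec]
    calc nE (D.mulVec ((D ^ k).mulVec x)) ≤ lam * nE ((D ^ k).mulVec x) := h _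
      _ ≤ lam * (lam ^ k * nE x) := mul_le_mul_of_nonneg_left ih hlam
      _ = lam ^ (k + 1) * nE x := by ring


/-- Consensus-error bound (Lemma 1): after `Γ` rounds of linear averaging with a
symmetric row-stochastic consensus matrix `V` whose deviation from the averaging
projector has operator norm at most `λ`, each node's vector is within
`λ^Γ √n` times the maximum pairwise distance of the initial vectors from their average. -/
theorem consensus_error_bound (n M : ℕ) (hn : 1 ≤ n)
    (V : Matrix (Fin n) (Fin n) ℝ)
    (hVsym : V.IsSymm)
    (hV1 : V.mulVec (fun _ => (1 : ℝ)) = fun _ => (1 : ℝ))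
    (lam : ℝ) (hlam : 0 ≤ lam)
    (hop : ∀ x : Fin n → ℝ,
      ‖(WithLp.equiv 2 (Fin n → ℝ)).symm
          ((V - (n : ℝ)⁻¹ • Matrix.of fun _ _ => (1 : ℝ)).mulVec x)‖
        ≤ lam * ‖(WithLp.equiv 2 (Fin n → ℝ)).symm x‖)
    (Wt : Matrix (Fin n) (Fin M) ℝ) (Γ : ℕ)
    (W : Matrix (Fin n) (Fin M) ℝ) (hW : W = (V ^ Γ) * Wt)
    (wbar : Fin M → ℝ) (hwbar : wbar = (n : ℝ)⁻¹ • ∑ j, Wt j)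
    (i : Fin n) :
    ‖(WithLp.equiv 2 (Fin M → ℝ)).symm (W i - wbar)‖
      ≤ lam ^ Γ * Real.sqrt n *
        (Finset.univ ×ˢ (Finset.univ : Finset (Fin n))).sup'
          ⟨(⟨0, hn⟩, ⟨0, hn⟩), Finset.mem_univ _⟩
          (fun p => ‖(WithLp.equiv 2 (Fin M → ℝ)).symm (Wt p.1 - Wt p.2)‖) := by
  have hn0 : (n : ℝ) ≠ 0 := Nat.cast_ne_zero.mpr (by omega)
  set P : Matrix (Fin n) (Fin n) ℝ := (n : ℝ)⁻¹ • Matrix.of fun _ _ => (1 : ℝ) with hP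
  set D : Matrix (Fin n) (Fin n) ℝ := V - P with hD
  -- row/column sums of V
  have hrow : ∀ i, ∑ k, V i k = 1 := by
    intro i
    have := congrFun hV1 i
    simpa [Matrix.mulVec, dotProduct] using this
  have hcol : ∀ j, ∑ k, V k j = 1 := by
    intro j
    calc ∑ k, V k j = ∑ k, V j k := Finset.sum_congr rfl fun k _ => (hVsym.apply j k)
      _ = 1 := hrow j
  have hVP : V * P = P := by
    ext a b
    simp only [Matrix.mul_apply, hP, Matrix.smul_apply, Matrix.of_apply, smul_eq_mul, mul_one]
    rw [← Finset.sum_mul, hrow, one_mul]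
  have hPV : P * V = P := by
    ext a b
    simp only [Matrix.mul_apply, hP, Matrix.smul_apply, Matrix.of_apply, smul_eq_mul, mul_one]
    rw [← Finset.mul_sum, hcol, mul_one]
  have hPP : P * P = P := by
    ext a b
    simp only [Matrix.mul_apply, hP, Matrix.smul_apply, Matrix.of_apply, smul_eq_mul, mul_one]
    rw [Finset.sum_const, Finset.card_univ, Fintype.card_fin, nsmul_eq_mul]
    field_simp
  have hDP0 : D * P = 0 := by
    rw [hD, Matrix.sub_mul, hVP, hPP, sub_self]
  have hD1P : D * (1 - P) = D := by
    rw [mul_sub, mul_one, hDP0, sub_zero]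
  -- the key algebraic identity
  have hkey : ∀ Γ : ℕ, V ^ Γ - P = D ^ Γ * (1 - P) := by
    intro G
    induction G with
    | zero => simp
    | succ k ih =>
      have hcomm : V * D ^ k = D ^ k * V := by
        have : Commute V D := by
          simp only [hD, Commute, SemiconjBy, mul_sub, sub_mul, hVP, hPV]
        exact (this.pow_right k).eq
      have hVsubP : V * (1 - P) = D := by
        rw [mul_sub, mul_one, hVP, hD]
      calc V ^ (k+1) - P = V * (V ^ k - P) := by rw [mul_sub, hVP, pow_succ']
        _ = V * (D ^ k * (1 - P)) := by rw [ih]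
        _ = D ^ k * (V * (1 - P)) := by rw [← mul_assoc, hcomm, mul_assoc]
        _ = D ^ k * D := by rw [hVsubP]
        _ = D ^ (k+1) * (1 - P) := by rw [pow_succ, mul_assoc, hD1P]
  set B : Matrix (Fin n) (Fin M) ℝ := (1 - P) * Wt with hB
  -- row i of W minus wbar equals row i of D^Γ * B
  have hPWt : ∀ a m, (P * Wt) a m = wbar m := by
    intro a m
    simp only [Matrix.mul_apply, hP, Matrix.smul_apply, Matrix.of_apply, smul_eq_mul, one_mul]
    rw [hwbar, ← Finset.mul_sum]
    simp [Finset.sum_apply]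
    left; exact (Finset.sum_apply m _ _).symm
  have hrowid : W i - wbar = fun m => (D ^ Γ * B) i m := by
    funext m
    have h1 : (D ^ Γ * B) i m = ((V ^ Γ - P) * Wt) i m := by
      rw [hB, ← Matrix.mul_assoc, ← hkey]
    rw [Pi.sub_apply, h1, hW, Matrix.sub_mul, Matrix.sub_apply, hPWt]
  -- abbreviation for the max-pairwise-sup
  set maxP : ℝ := (Finset.univ ×ˢ (Finset.univ : Finset (Fin n))).sup'
      ⟨(⟨0, hn⟩, ⟨0, hn⟩), Finset.mem_univ _⟩
      (fun p => ‖(WithLp.equiv 2 (Fin M → ℝ)).symm (Wt p.1 - Wt p.2)‖) with hmaxP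
  have hpair : ∀ a b : Fin n, nE (Wt a - Wt b) ≤ maxP := by
    intro a b
    exact Finset.le_sup' (f := fun p : Fin n × Fin n =>
      ‖(WithLp.equiv 2 (Fin M → ℝ)).symm (Wt p.1 - Wt p.2)‖)
      (Finset.mem_univ (a, b))
  have hmax0 : 0 ≤ maxP := le_trans (nE_nonneg _) (by simpa using hpair ⟨0, hn⟩ ⟨0, hn⟩)
  -- rows of B are within maxP
  have hBrow : ∀ a, B a = Wt a - wbar := by
    intro a
    funext m
    rw [hB, Matrix.sub_mul, Matrix.sub_apply, Matrix.one_mul, hPWt]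
    rfl
  have hBrow_le : ∀ a, nE (B a) ≤ maxP := by
    intro a
    rw [hBrow]
    have hdecomp : Wt a - wbar = (n : ℝ)⁻¹ • ∑ j, (Wt a - Wt j) := by
      funext m
      rw [hwbar]
      simp only [Pi.sub_apply, Pi.smul_apply, Finset.sum_apply, smul_eq_mul, Finset.sum_sub_distrib,
        Finset.sum_const, Finset.card_univ, Fintype.card_fin, nsmul_eq_mul]
      field_simp
      exact congrArg _ (Finset.sum_apply m _ _)
    rw [hdecomp, nE_smul]
    calc |((n:ℝ)⁻¹)| * nE (∑ j, (Wt a - Wt j))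
        ≤ (n:ℝ)⁻¹ * ∑ j, nE (Wt a - Wt j) := by
          rw [abs_of_nonneg (by positivity)]
          exact mul_le_mul_of_nonneg_left (nE_sum_le _ _) (by positivity)
      _ ≤ (n:ℝ)⁻¹ * ∑ _j : Fin n, maxP := by
          gcongr with j _
          exact hpair a j
      _ = maxP := by
          rw [Finset.sum_const, Finset.card_univ, Fintype.card_fin, nsmul_eq_mul]
          field_simp
  -- operator bound
  have hDop : ∀ x : Fin n → ℝ, nE (D.mulVec x) ≤ lam * nE x := hop
  -- main square estimate
  have hsq : nE (W i - wbar) ^ 2 ≤ lam ^ (2 * Γ) * (n * maxP ^ 2) := by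
    rw [nE_sq, hrowid]
    calc ∑ m, ((D ^ Γ * B) i m) ^ 2
        ≤ ∑ m, ∑ a, ((D ^ Γ * B) a m) ^ 2 := by
          apply Finset.sum_le_sum
          intro m _
          exact Finset.single_le_sum (f := fun a => ((D ^ Γ * B) a m) ^ 2)
            (fun a _ => sq_nonneg _) (Finset.mem_univ i)
      _ ≤ ∑ m, (lam ^ Γ * nE (fun k => B k m)) ^ 2 := by
          apply Finset.sum_le_sum
          intro m _
          have hcolm : (fun a => (D ^ Γ * B) a m) = (D ^ Γ).mulVec (fun k => B k m) := by
            funext a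
            simp [Matrix.mul_apply, Matrix.mulVec, dotProduct]
          have h1 : ∑ a, ((D ^ Γ * B) a m) ^ 2 = nE (fun a => (D ^ Γ * B) a m) ^ 2 := by
            rw [nE_sq]
          rw [h1, hcolm]
          have := pow_mulVec_bound D lam hlam hDop Γ (fun k => B k m)
          exact pow_le_pow_left₀ (nE_nonneg _) this 2
      _ = lam ^ (2 * Γ) * ∑ a, ∑ m, (B a m) ^ 2 := by
          rw [Finset.sum_comm]
          rw [Finset.mul_sum]
          apply Finset.sum_congr rfl
          intro m _
          rw [mul_pow, nE_sq, ← pow_mul, mul_comm Γ 2]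
      _ ≤ lam ^ (2 * Γ) * ∑ _a : Fin n, maxP ^ 2 := by
          apply mul_le_mul_of_nonneg_left _ (by positivity)
          apply Finset.sum_le_sum
          intro a _
          have : ∑ m, (B a m) ^ 2 = nE (B a) ^ 2 := (nE_sq _).symm
          rw [this]
          exact pow_le_pow_left₀ (nE_nonneg _) (hBrow_le a) 2
      _ = lam ^ (2 * Γ) * (n * maxP ^ 2) := by
          rw [Finset.sum_const, Finset.card_univ, Fintype.card_fin, nsmul_eq_mul]
  -- conclude
  have hRHS0 : 0 ≤ lam ^ Γ * Real.sqrt n * maxP := by positivity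
  have : nE (W i - wbar) ≤ lam ^ Γ * Real.sqrt n * maxP := by
    have h2 : nE (W i - wbar) ^ 2 ≤ (lam ^ Γ * Real.sqrt n * maxP) ^ 2 := by
      calc nE (W i - wbar) ^ 2 ≤ lam ^ (2 * Γ) * (n * maxP ^ 2) := hsq
        _ = (lam ^ Γ * Real.sqrt n * maxP) ^ 2 := by
          rw [mul_pow, mul_pow, Real.sq_sqrt (by positivity), ← pow_mul, mul_comm Γ 2]; ring
    calc nE (W i - wbar) = Real.sqrt (nE (W i - wbar) ^ 2) := (Real.sqrt_sq (nE_nonneg _)).symm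
      _ ≤ Real.sqrt ((lam ^ Γ * Real.sqrt n * maxP) ^ 2) := Real.sqrt_le_sqrt h2
      _ = lam ^ Γ * Real.sqrt n * maxP := Real.sqrt_sq hRHS0
  exact this
end

section
/- Let H be a real inner product space. Let J be a nonempty finite index set, let (λ_j)_{j∈J} be nonnegative reals with ∑_{j∈J} λ_j = 1, and for each j let F_j : H → ℝ be differentiable with β-Lipschitz gradient (β > 0). Let F = ∑_{j∈J} λ_j F_j, assume F is μ-strongly convex (μ > 0), and let w* ∈ H be a minimizer of F. Let η ≥ 0, let w̄ ∈ H and (w_j)_{j∈J} ⊆ H, and set g = ∑_{j∈J} λ_j ∇F_j(w_j). Then −η ⟨∇F(w̄), g⟩ ≤ −μη (F(w̄) − F(w*)) − (η/2)‖g‖² + (ηβ²/2) ∑_{j∈J} λ_j ‖w̄ − w_j‖². -/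
/-!
Strong convexity at `w̄`, evaluated at `w*`, gives the Polyak–Łojasiewicz bound
`2μ (F(w̄) - F(w*)) ≤ ‖∇F(w̄)‖²`. Since `∇F(w̄) - g = ∑ λ_j (∇F_j(w̄) - ∇F_j(w_j))`, Jensen's
inequality for `‖·‖²` and the Lipschitz bound give `‖∇F(w̄) - g‖² ≤ β² ∑ λ_j ‖w̄ - w_j‖²`.
Expanding `‖∇F(w̄) - g‖² = ‖∇F(w̄)‖² - 2⟪∇F(w̄), g⟫ + ‖g‖²` and combining the two bounds
yields the claim after scaling by `η / 2`.
-/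

open scoped BigOperators
open RealInnerProductSpace

/-- `g` is the gradient of `f` at `x` (via the Riesz embedding into the dual);
this only needs an inner product space, not completeness. -/
def HasGradAt {H : Type*} [NormedAddCommGroup H] [InnerProductSpace ℝ H]
    (f : H → ℝ) (g x : H) : Prop :=
  HasFDerivAt f (InnerProductSpace.toDualMap ℝ H g) x

open Finset

section

variable {ι E : Type*} {s : Finset ι} {lam : ι → ℝ}

theorem sq_norm_sum_smul_le [NormedAddCommGroup E] [NormedSpace ℝ E]
    (hlam : ∀ j ∈ s, 0 ≤ lam j) (hsum : ∑ j ∈ s, lam j = 1) (v : ι → E) :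
    ‖∑ j ∈ s, lam j • v j‖ ^ 2 ≤ ∑ j ∈ s, lam j * ‖v j‖ ^ 2 := by
  simpa using ((convexOn_norm convex_univ).pow (fun _ _ ↦ norm_nonneg _) 2).map_sum_le
    hlam hsum (fun j _ ↦ Set.mem_univ (v j))

theorem sq_norm_sum_smul_sub_le_of_lipschitz {F : Type*} [NormedAddCommGroup E]
    [NormedAddCommGroup F] [NormedSpace ℝ F] {β : ℝ}
    (hlam : ∀ j ∈ s, 0 ≤ lam j) (hsum : ∑ j ∈ s, lam j = 1) (G : ι → E → F)
    (hlip : ∀ j ∈ s, ∀ x y, ‖G j x - G j y‖ ≤ β * ‖x - y‖) (x : E) (y : ι → E) :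
    ‖∑ j ∈ s, lam j • (G j x - G j (y j))‖ ^ 2 ≤ β ^ 2 * ∑ j ∈ s, lam j * ‖x - y j‖ ^ 2 := by
  have hsq : ∀ j ∈ s, ‖G j x - G j (y j)‖ ^ 2 ≤ β ^ 2 * ‖x - y j‖ ^ 2 := fun j hj ↦
    (pow_le_pow_left₀ (norm_nonneg _) (hlip j hj x (y j)) 2).trans_eq (mul_pow _ _ 2)
  calc ‖∑ j ∈ s, lam j • (G j x - G j (y j))‖ ^ 2
      ≤ ∑ j ∈ s, lam j * ‖G j x - G j (y j)‖ ^ 2 := sq_norm_sum_smul_le hlam hsum _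
    _ ≤ ∑ j ∈ s, lam j * (β ^ 2 * ‖x - y j‖ ^ 2) :=
      sum_le_sum fun j hj ↦ mul_le_mul_of_nonneg_left (hsq j hj) (hlam j hj)
    _ = β ^ 2 * ∑ j ∈ s, lam j * ‖x - y j‖ ^ 2 := by
      rw [mul_sum]
      exact sum_congr rfl fun j _ ↦ by ring

end

/-- The Polyak–Łojasiewicz inequality: `h` is strong convexity at a point with gradient `a`,
evaluated at that point plus `d`. -/
theorem two_mul_sub_le_sq_norm_of_quadratic_lower_bound {E : Type*} [NormedAddCommGroup E]
    [InnerProductSpace ℝ E] {a d : E} {fx fy μ : ℝ} (hμ : 0 ≤ μ)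
    (h : fy + ⟪a, d⟫ + μ / 2 * ‖d‖ ^ 2 ≤ fx) :
    2 * μ * (fy - fx) ≤ ‖a‖ ^ 2 := by
  have hsq : ‖a + μ • d‖ ^ 2 = ‖a‖ ^ 2 + 2 * μ * ⟪a, d⟫ + μ ^ 2 * ‖d‖ ^ 2 := by
    rw [norm_add_sq_real, real_inner_smul_right, norm_smul, Real.norm_of_nonneg hμ]
    ring
  nlinarith [sq_nonneg ‖a + μ • d‖, mul_le_mul_of_nonneg_left h hμ]

theorem aggregated_gradient_inner_bound_general {H : Type*}
    [NormedAddCommGroup H] [InnerProductSpace ℝ H]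
    {ι : Type*} (s : Finset ι)
    (lam : ι → ℝ) (hlam : ∀ j ∈ s, 0 ≤ lam j) (hsum : ∑ j ∈ s, lam j = 1)
    (β : ℝ)
    (G : ι → H → H)
    (hlip : ∀ j ∈ s, ∀ w₁ w₂, ‖G j w₁ - G j w₂‖ ≤ β * ‖w₁ - w₂‖)
    (μ : ℝ) (hμ : 0 < μ)
    (Ftot : H → ℝ)
    (Gtot : H → H) (hG : Gtot = fun w => ∑ j ∈ s, lam j • G j w)
    (hsc : ∀ w₁ w₂ : H,
      Ftot w₂ + ⟪Gtot w₂, w₁ - w₂⟫ + μ / 2 * ‖w₁ - w₂‖ ^ 2 ≤ Ftot w₁)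
    (wstar : H)
    (η : ℝ) (hη : 0 ≤ η)
    (wbar : H) (w : ι → H)
    (g : H) (hg : g = ∑ j ∈ s, lam j • G j (w j)) :
    -η * ⟪Gtot wbar, g⟫ ≤
      -(μ * η) * (Ftot wbar - Ftot wstar) - η / 2 * ‖g‖ ^ 2
        + η * β ^ 2 / 2 * ∑ j ∈ s, lam j * ‖wbar - w j‖ ^ 2 := by
  have hPL := two_mul_sub_le_sq_norm_of_quadratic_lower_bound hμ.le (hsc wstar wbar)
  have hdiff : Gtot wbar - g = ∑ j ∈ s, lam j • (G j wbar - G j (w j)) := by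
    simp only [hG, hg, smul_sub, sum_sub_distrib]
  have hdisp := sq_norm_sum_smul_sub_le_of_lipschitz hlam hsum G hlip wbar w
  rw [← hdiff, norm_sub_sq_real] at hdisp
  linear_combination (η / 2) * (hPL + hdisp)

/-- Lemma 2 of the appendix: inner-product bound for the aggregated gradient `g`
evaluated at dispersed local models, for a convex combination `F = ∑ λ_j F_j` of
β-smooth functions that is μ-strongly convex with minimizer `w*`. -/
theorem aggregated_gradient_inner_bound {H : Type*}
    [NormedAddCommGroup H] [InnerProductSpace ℝ H]
    {ι : Type*} (s : Finset ι) (hs : s.Nonempty)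
    (lam : ι → ℝ) (hlam : ∀ j ∈ s, 0 ≤ lam j) (hsum : ∑ j ∈ s, lam j = 1)
    (β : ℝ) (hβ : 0 < β)
    (F : ι → H → ℝ) (G : ι → H → H)
    (hgrad : ∀ j ∈ s, ∀ w, HasGradAt (F j) (G j w) w)
    (hlip : ∀ j ∈ s, ∀ w₁ w₂, ‖G j w₁ - G j w₂‖ ≤ β * ‖w₁ - w₂‖)
    (μ : ℝ) (hμ : 0 < μ)
    (Ftot : H → ℝ) (hF : Ftot = fun w => ∑ j ∈ s, lam j * F j w)
    (Gtot : H → H) (hG : Gtot = fun w => ∑ j ∈ s, lam j • G j w)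
    (hsc : ∀ w₁ w₂ : H,
      Ftot w₂ + ⟪Gtot w₂, w₁ - w₂⟫ + μ / 2 * ‖w₁ - w₂‖ ^ 2 ≤ Ftot w₁)
    (wstar : H) (hmin : ∀ w, Ftot wstar ≤ Ftot w)
    (η : ℝ) (hη : 0 ≤ η)
    (wbar : H) (w : ι → H)
    (g : H) (hg : g = ∑ j ∈ s, lam j • G j (w j)) :
    -η * ⟪Gtot wbar, g⟫ ≤
      -(μ * η) * (Ftot wbar - Ftot wstar) - η / 2 * ‖g‖ ^ 2
        + η * β ^ 2 / 2 * ∑ j ∈ s, lam j * ‖wbar - w j‖ ^ 2 :=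
  aggregated_gradient_inner_bound_general s lam hlam hsum β G hlip μ hμ Ftot Gtot hG hsc wstar η hη
    wbar w g hg
end

section
/- Let H be a real inner product space. Let J be a nonempty finite index set, let (λ_j)_{j∈J} be nonnegative reals with ∑_{j∈J} λ_j = 1, and for each j let F_j : H → ℝ be differentiable with β-Lipschitz gradient (β > 0). Let F = ∑_{j∈J} λ_j F_j, assume F is μ-strongly convex (μ > 0), and let w* be a minimizer of F. Let 0 < η ≤ 1/β, let w̄ ∈ H and (w_j)_{j∈J} ⊆ H, set g = ∑_{j∈J} λ_j ∇F_j(w_j), and let w̄⁺ = w̄ − η g. Then F(w̄⁺) − F(w*) ≤ (1 − μη) (F(w̄) − F(w*)) + (ηβ²/2) ∑_{j∈J} λ_j ‖w̄ − w_j‖². -/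
open scoped BigOperators
open RealInnerProductSpace

/-- Descent lemma: a function with β-Lipschitz gradient satisfies the quadratic
upper bound. -/
theorem descent_lemma {H : Type*} [NormedAddCommGroup H] [InnerProductSpace ℝ H]
    (f : H → ℝ) (gr : H → H) (β : ℝ) (hβ : 0 ≤ β)
    (hgrad : ∀ x, HasGradAt f (gr x) x)
    (hlip : ∀ a b, ‖gr a - gr b‖ ≤ β * ‖a - b‖) (x y : H) :
    f y ≤ f x + ⟪gr x, y - x⟫ + β / 2 * ‖y - x‖ ^ 2 := by
  set d := y - x with hd
  set φ : ℝ → ℝ := fun t => f (x + t • d) - t * ⟪gr x, d⟫ - β / 2 * ‖d‖ ^ 2 * t ^ 2 with hφ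
  have hline : ∀ t : ℝ, HasDerivAt (fun t : ℝ => x + t • d) d t := by
    intro t
    simpa using ((hasDerivAt_id t).smul_const d).const_add x
  have hfd : ∀ t : ℝ, HasDerivAt (fun t => f (x + t • d)) ⟪gr (x + t • d), d⟫ t := by
    intro t
    have hgr := hgrad (x + t • d)
    rw [HasGradAt] at hgr
    have := hgr.comp_hasDerivAt t (hline t)
    simpa [InnerProductSpace.toDualMap_apply_apply, Function.comp_def] using this
  have hφd : ∀ t : ℝ, HasDerivAt φ
      (⟪gr (x + t • d), d⟫ - ⟪gr x, d⟫ - β * ‖d‖ ^ 2 * t) t := by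
    intro t
    have h1 : HasDerivAt (fun t : ℝ => t * ⟪gr x, d⟫) ⟪gr x, d⟫ t := by
      simpa using (hasDerivAt_id t).mul_const ⟪gr x, d⟫
    have h2 : HasDerivAt (fun t : ℝ => β / 2 * ‖d‖ ^ 2 * t ^ 2)
        (β * ‖d‖ ^ 2 * t) t := by
      have := (hasDerivAt_pow 2 t).const_mul (β / 2 * ‖d‖ ^ 2)
      rw [show β * ‖d‖ ^ 2 * t = β / 2 * ‖d‖ ^ 2 * ((2:ℕ) * t ^ (2 - 1)) by push_cast; ring]
      exact this
    exact ((hfd t).sub h1).sub h2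
  have hderiv_nonpos : ∀ t : ℝ, 0 ≤ t → deriv φ t ≤ 0 := by
    intro t ht
    rw [(hφd t).deriv]
    have hcs : ⟪gr (x + t • d) - gr x, d⟫ ≤ ‖gr (x + t • d) - gr x‖ * ‖d‖ :=
      real_inner_le_norm _ _
    have hl : ‖gr (x + t • d) - gr x‖ ≤ β * (t * ‖d‖) := by
      have := hlip (x + t • d) x
      simpa [norm_smul, abs_of_nonneg ht, mul_assoc] using this
    have hdn : (0:ℝ) ≤ ‖d‖ := norm_nonneg _
    have : ⟪gr (x + t • d), d⟫ - ⟪gr x, d⟫ ≤ β * (t * ‖d‖) * ‖d‖ := by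
      rw [← inner_sub_left]
      exact hcs.trans (by nlinarith)
    nlinarith
  have hanti : AntitoneOn φ (Set.Ici (0:ℝ)) := by
    apply antitoneOn_of_deriv_nonpos (convex_Ici 0)
    · exact fun t _ => ((hφd t).differentiableAt).continuousAt.continuousWithinAt
    · exact fun t _ => ((hφd t).differentiableAt).differentiableWithinAt
    · intro t ht
      exact hderiv_nonpos t (le_of_lt (by simpa using ht))
  have h01 : φ 1 ≤ φ 0 := hanti (by simp) (by simp : (1:ℝ) ∈ Set.Ici (0:ℝ)) zero_le_one
  simp only [hφ, one_smul, zero_smul, add_zero, one_mul, one_pow, mul_one] at h01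
  have hxy : x + d = y := by rw [hd]; abel
  rw [hxy] at h01
  nlinarith [h01]

set_option maxHeartbeats 1000000 in
/-- Noiseless core of Theorem 1: one step of aggregated gradient descent, with
the gradient evaluated at dispersed local models, contracts the optimality gap by
`(1 − μη)` up to a penalty proportional to the weighted squared dispersion. -/
theorem one_step_descent_noiseless {H : Type*}
    [NormedAddCommGroup H] [InnerProductSpace ℝ H]
    {ι : Type*} (s : Finset ι) (hs : s.Nonempty)
    (lam : ι → ℝ) (hlam : ∀ j ∈ s, 0 ≤ lam j) (hsum : ∑ j ∈ s, lam j = 1)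
    (β : ℝ) (hβ : 0 < β)
    (F : ι → H → ℝ) (G : ι → H → H)
    (hgrad : ∀ j ∈ s, ∀ w, HasGradAt (F j) (G j w) w)
    (hlip : ∀ j ∈ s, ∀ w₁ w₂, ‖G j w₁ - G j w₂‖ ≤ β * ‖w₁ - w₂‖)
    (μ : ℝ) (hμ : 0 < μ)
    (Ftot : H → ℝ) (hF : Ftot = fun w => ∑ j ∈ s, lam j * F j w)
    (Gtot : H → H) (hG : Gtot = fun w => ∑ j ∈ s, lam j • G j w)
    (hsc : ∀ w₁ w₂ : H,
      Ftot w₂ + ⟪Gtot w₂, w₁ - w₂⟫ + μ / 2 * ‖w₁ - w₂‖ ^ 2 ≤ Ftot w₁)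
    (wstar : H) (hmin : ∀ w, Ftot wstar ≤ Ftot w)
    (η : ℝ) (hη0 : 0 < η) (hη : η ≤ 1 / β)
    (wbar : H) (w : ι → H)
    (g : H) (hg : g = ∑ j ∈ s, lam j • G j (w j))
    (wplus : H) (hplus : wplus = wbar - η • g) :
    Ftot wplus - Ftot wstar ≤
      (1 - μ * η) * (Ftot wbar - Ftot wstar)
        + η * β ^ 2 / 2 * ∑ j ∈ s, lam j * ‖wbar - w j‖ ^ 2 := by
  -- gradient of Ftot
  have hFgrad : ∀ x, HasGradAt Ftot (Gtot x) x := by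
    intro x
    rw [hF, hG]
    have : HasFDerivAt (fun w => ∑ j ∈ s, lam j * F j w)
        (∑ j ∈ s, lam j • (InnerProductSpace.toDualMap ℝ H (G j x) : H →L[ℝ] ℝ)) x := by
      apply HasFDerivAt.fun_sum
      intro j hj
      exact ((hgrad j hj x).const_mul (lam j)).congr_fderiv (by
        ext v; simp [smul_eq_mul, mul_comm])
    have heq : (InnerProductSpace.toDualMap ℝ H (∑ j ∈ s, lam j • G j x) : H →L[ℝ] ℝ)
        = ∑ j ∈ s, lam j • (InnerProductSpace.toDualMap ℝ H (G j x) : H →L[ℝ] ℝ) := by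
      ext v
      simp [InnerProductSpace.toDualMap_apply_apply, inner_smul_left, sum_inner]
    rw [HasGradAt, heq]
    exact this
  -- Lipschitz bound for Gtot
  have hGlip : ∀ a b, ‖Gtot a - Gtot b‖ ≤ β * ‖a - b‖ := by
    intro a b
    rw [hG]
    simp only
    rw [← Finset.sum_sub_distrib]
    calc ‖∑ j ∈ s, (lam j • G j a - lam j • G j b)‖
        ≤ ∑ j ∈ s, ‖lam j • G j a - lam j • G j b‖ := norm_sum_le _ _
      _ ≤ ∑ j ∈ s, lam j * (β * ‖a - b‖) := by
          apply Finset.sum_le_sum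
          intro j hj
          rw [← smul_sub, norm_smul, Real.norm_eq_abs, abs_of_nonneg (hlam j hj)]
          exact mul_le_mul_of_nonneg_left (hlip j hj a b) (hlam j hj)
      _ = β * ‖a - b‖ := by rw [← Finset.sum_mul, hsum, one_mul]
  -- descent step
  have hdesc := descent_lemma Ftot Gtot β hβ.le hFgrad hGlip wbar wplus
  have hstep : wplus - wbar = -(η • g) := by rw [hplus]; abel
  rw [hstep] at hdesc
  have hdesc' : Ftot wplus ≤ Ftot wbar - η * ⟪Gtot wbar, g⟫ + β / 2 * η ^ 2 * ‖g‖ ^ 2 := by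
    have h1 : ⟪Gtot wbar, -(η • g)⟫ = -(η * ⟪Gtot wbar, g⟫) := by
      rw [inner_neg_right, real_inner_smul_right]
    have h2 : ‖-(η • g)‖ ^ 2 = η ^ 2 * ‖g‖ ^ 2 := by
      rw [norm_neg, norm_smul, Real.norm_eq_abs, mul_pow, sq_abs]
    rw [h1, h2] at hdesc
    linarith
  -- β η² /2 ≤ η/2
  have hg2 : (0:ℝ) ≤ ‖g‖ ^ 2 := sq_nonneg _
  have hbe : β * η ≤ 1 := by
    rw [le_div_iff₀ hβ] at hη; linarith
  have hdesc2 : Ftot wplus ≤ Ftot wbar - η * ⟪Gtot wbar, g⟫ + η / 2 * ‖g‖ ^ 2 := by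
    have key : (0:ℝ) ≤ (1 - β * η) * η * ‖g‖ ^ 2 :=
      mul_nonneg (mul_nonneg (by linarith) hη0.le) hg2
    nlinarith [hdesc']
  -- complete the square
  have hsq : ‖g - Gtot wbar‖ ^ 2 = ‖g‖ ^ 2 - 2 * ⟪Gtot wbar, g⟫ + ‖Gtot wbar‖ ^ 2 := by
    rw [norm_sub_sq_real, real_inner_comm]
    try ring
  have hdesc3 : Ftot wplus ≤ Ftot wbar - η / 2 * ‖Gtot wbar‖ ^ 2
      + η / 2 * ‖g - Gtot wbar‖ ^ 2 := by nlinarith [hdesc2, hsq]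
  -- dispersion bound: ‖g - Gtot wbar‖² ≤ β² ∑ λ ‖wbar - w j‖²
  have hdisp : ‖g - Gtot wbar‖ ^ 2 ≤ β ^ 2 * ∑ j ∈ s, lam j * ‖wbar - w j‖ ^ 2 := by
    have hdiff : g - Gtot wbar = ∑ j ∈ s, lam j • (G j (w j) - G j wbar) := by
      rw [hg, hG]
      simp only [smul_sub]
      rw [Finset.sum_sub_distrib]
    have htri : ‖g - Gtot wbar‖ ≤ ∑ j ∈ s, lam j * ‖G j (w j) - G j wbar‖ := by
      rw [hdiff]
      refine (norm_sum_le _ _).trans ?_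
      apply Finset.sum_le_sum
      intro j hj
      rw [norm_smul, Real.norm_eq_abs, abs_of_nonneg (hlam j hj)]
    -- Jensen via Cauchy–Schwarz
    have hjensen : (∑ j ∈ s, lam j * ‖G j (w j) - G j wbar‖) ^ 2
        ≤ ∑ j ∈ s, lam j * ‖G j (w j) - G j wbar‖ ^ 2 := by
      have := Finset.sum_sq_le_sum_mul_sum_of_sq_eq_mul s
        (r := fun j => lam j * ‖G j (w j) - G j wbar‖)
        (f := fun j => lam j)
        (g := fun j => lam j * ‖G j (w j) - G j wbar‖ ^ 2)
        (fun j hj => hlam j hj)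
        (fun j hj => mul_nonneg (hlam j hj) (sq_nonneg _))
        (fun j hj => by ring)
      rwa [hsum, one_mul] at this
    have hsqle : ‖g - Gtot wbar‖ ^ 2 ≤ ∑ j ∈ s, lam j * ‖G j (w j) - G j wbar‖ ^ 2 := by
      refine le_trans ?_ hjensen
      have h0 : (0:ℝ) ≤ ∑ j ∈ s, lam j * ‖G j (w j) - G j wbar‖ := by
        apply Finset.sum_nonneg
        exact fun j hj => mul_nonneg (hlam j hj) (norm_nonneg _)
      exact pow_le_pow_left₀ (norm_nonneg _) htri 2
    refine hsqle.trans ?_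
    rw [Finset.mul_sum]
    apply Finset.sum_le_sum
    intro j hj
    have h := hlip j hj (w j) wbar
    rw [norm_sub_rev (w j) wbar] at h
    have : ‖G j (w j) - G j wbar‖ ^ 2 ≤ (β * ‖wbar - w j‖) ^ 2 :=
      pow_le_pow_left₀ (norm_nonneg _) h 2
    calc lam j * ‖G j (w j) - G j wbar‖ ^ 2
        ≤ lam j * (β * ‖wbar - w j‖) ^ 2 :=
          mul_le_mul_of_nonneg_left this (hlam j hj)
      _ = β ^ 2 * (lam j * ‖wbar - w j‖ ^ 2) := by ring
  -- PL inequality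
  have hPL : 2 * μ * (Ftot wbar - Ftot wstar) ≤ ‖Gtot wbar‖ ^ 2 := by
    have h := hsc wstar wbar
    have hcs : -(‖Gtot wbar‖ * ‖wstar - wbar‖) ≤ ⟪Gtot wbar, wstar - wbar⟫ := by
      have := abs_real_inner_le_norm (Gtot wbar) (wstar - wbar)
      cases abs_le.mp this with
      | intro hl hr => linarith
    nlinarith [sq_nonneg (μ * ‖wstar - wbar‖ - ‖Gtot wbar‖), norm_nonneg (wstar - wbar),
      norm_nonneg (Gtot wbar)]
  -- assemble
  have hdispη : η / 2 * ‖g - Gtot wbar‖ ^ 2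
      ≤ η * β ^ 2 / 2 * ∑ j ∈ s, lam j * ‖wbar - w j‖ ^ 2 := by
    have := mul_le_mul_of_nonneg_left hdisp (by positivity : (0:ℝ) ≤ η / 2)
    linarith [this]
  nlinarith [hdesc3, hPL, hdispη, hη0.le]
end

section
/- Let a ≤ t be natural numbers, let b > 0, and let α be a real number with (a : ℝ) − 1 + α > 0. Then ∏_{j=a}^{t−1} (1 + b/(j + α)) ≤ ( (t − 1 + α) / (a − 1 + α) )^b, where the right-hand side uses the real power and an empty product is 1. -/
open scoped BigOperators

lemma term_bound (b : ℝ) (hb : 0 < b) (x : ℝ) (hx1 : 0 < x - 1) :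
    1 + b / x ≤ (x / (x - 1)) ^ b := by
  have hx : (0:ℝ) < x := by linarith
  have hq : 0 < x / (x - 1) := div_pos hx hx1
  have hlog : 1 / x ≤ Real.log (x / (x - 1)) := by
    have h1 : Real.log ((x - 1) / x) ≤ (x - 1) / x - 1 :=
      Real.log_le_sub_one_of_pos (div_pos hx1 hx)
    have h2 : Real.log (x / (x - 1)) = - Real.log ((x - 1) / x) := by
      rw [← Real.log_inv]
      congr 1
      field_simp
    have h3 : (x - 1) / x - 1 = -(1 / x) := by field_simp; ring
    rw [h2]
    linarith [h1.trans_eq h3]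
  calc 1 + b / x ≤ Real.exp (b / x) := by
        have := Real.add_one_le_exp (b / x)
        linarith
    _ ≤ Real.exp (Real.log (x / (x - 1)) * b) := by
        apply Real.exp_le_exp.2
        rw [div_eq_mul_one_div b x, mul_comm]
        exact mul_le_mul_of_nonneg_right hlog hb.le
    _ = (x / (x - 1)) ^ b := (Real.rpow_def_of_pos hq b).symm

/-- Product bound (eq. (eq:ln(i)-t)):
`∏_{j=a}^{t−1} (1 + b/(j + α)) ≤ ((t − 1 + α)/(a − 1 + α))^b` (real power). -/
theorem product_rpow_bound (a t : ℕ) (hat : a ≤ t)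
    (b : ℝ) (hb : 0 < b) (α : ℝ) (hα : (a : ℝ) - 1 + α > 0) :
    ∏ j ∈ Finset.Ico a t, (1 + b / ((j : ℝ) + α))
      ≤ (((t : ℝ) - 1 + α) / ((a : ℝ) - 1 + α)) ^ b := by
  have key : ∀ j ∈ Finset.Ico a t, (0:ℝ) < (j:ℝ) - 1 + α := by
    intro j hj
    have : (a:ℝ) ≤ (j:ℝ) := by exact_mod_cast (Finset.mem_Ico.1 hj).1
    linarith
  have tele : ∏ j ∈ Finset.Ico a t, (((j:ℝ) + α) / ((j:ℝ) - 1 + α))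
      = ((t : ℝ) - 1 + α) / ((a : ℝ) - 1 + α) := by
    induction t with
    | zero =>
        have : a = 0 := Nat.le_zero.1 hat
        subst this
        simp only [Finset.Ico_self, Finset.prod_empty, Nat.cast_zero]
        rw [div_self]
        push_cast at hα; linarith
    | succ n ih =>
        rcases Nat.lt_or_ge a (n+1) with h | h
        · have han : a ≤ n := Nat.lt_succ_iff.1 h
          have hn : (0:ℝ) < (n:ℝ) - 1 + α := by
            have : (a:ℝ) ≤ (n:ℝ) := by exact_mod_cast han
            linarith
          rw [Finset.prod_Ico_succ_top han, ih han (fun j hj => key j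
            (Finset.mem_Ico.2 ⟨(Finset.mem_Ico.1 hj).1,
              Nat.lt_succ_of_lt (Finset.mem_Ico.1 hj).2⟩))]
          push_cast
          have ha' : ((a:ℝ) - 1 + α) ≠ 0 := by linarith
          field_simp
          ring
        · have : a = n + 1 := le_antisymm hat h
          subst this
          simp only [Finset.Ico_self, Finset.prod_empty]
          rw [div_self]
          push_cast at hα ⊢; linarith
  calc ∏ j ∈ Finset.Ico a t, (1 + b / ((j : ℝ) + α))
      ≤ ∏ j ∈ Finset.Ico a t, (((j:ℝ) + α) / ((j:ℝ) - 1 + α)) ^ b := by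
        apply Finset.prod_le_prod
        · intro j hj
          have := key j hj
          have hjpos : (0:ℝ) < (j:ℝ) + α := by linarith
          positivity
        · intro j hj
          have h := term_bound b hb ((j:ℝ) + α) (by have := key j hj; linarith)
          have he : (j:ℝ) + α - 1 = (j:ℝ) - 1 + α := by ring
          rw [he] at h
          exact h
    _ = (∏ j ∈ Finset.Ico a t, (((j:ℝ) + α) / ((j:ℝ) - 1 + α))) ^ b := by
        rw [← Real.finset_prod_rpow]
        intro j hj
        have h1 := key j hj
        have h2 : (0:ℝ) < (j:ℝ) + α := by linarith
        positivity
    _ ≤ (((t : ℝ) - 1 + α) / ((a : ℝ) - 1 + α)) ^ b := by rw [tele]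
end

section
/- Let a ≤ t be natural numbers and let α, γ be real numbers with α > 1 and γ > 1. Define Σ = ∑_{ℓ=a}^{t−1} (γ/(ℓ + α)) ∏_{j=ℓ+1}^{t−1} (1 + 2γ/(j + α)). Then Σ ≤ 2γ √( (t − a)/(a + α) ) · ( 1 + (t − a)/(a + α − 1) )^{2γ}, where the last factor uses the real power. -/
open scoped BigOperators

-- pointwise harmonic bound
lemma key_sqrt (A : ℝ) (hA : 1 ≤ A) (k : ℕ) :
    1 / (A + k) ≤ (2 / Real.sqrt A) * (Real.sqrt ((k:ℝ) + 1) - Real.sqrt (k:ℝ)) := by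
  set u := Real.sqrt ((k : ℝ) + 1) with hu
  set s := Real.sqrt (k : ℝ) with hs
  set r := Real.sqrt A with hr
  have hk0 : (0:ℝ) ≤ k := Nat.cast_nonneg k
  have hu2 : u ^ 2 = (k : ℝ) + 1 := Real.sq_sqrt (by linarith)
  have hs2 : s ^ 2 = (k : ℝ) := Real.sq_sqrt hk0
  have hr2 : r ^ 2 = A := Real.sq_sqrt (by linarith)
  have hupos : 0 < u := Real.sqrt_pos.mpr (by linarith)
  have hrpos : 0 < r := Real.sqrt_pos.mpr (by linarith)
  have hsnn : 0 ≤ s := Real.sqrt_nonneg _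
  have hus : s ≤ u := Real.sqrt_le_sqrt (by linarith)
  have h1 : r * u ≤ A + k := by nlinarith [sq_nonneg (r - u)]
  have h2 : (1:ℝ) ≤ 2 * u * (u - s) := by nlinarith [sq_nonneg (u - s)]
  have hrupos : 0 < r * u := mul_pos hrpos hupos
  have hAk : (0:ℝ) < A + k := by linarith
  calc 1 / (A + k) ≤ 1 / (r * u) := one_div_le_one_div_of_le hrupos h1
    _ ≤ (2 / r) * (u - s) := by
        rw [div_le_iff₀ hrupos, div_mul_eq_mul_div, div_mul_eq_mul_div,
          le_div_iff₀ hrpos]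
        nlinarith [mul_le_mul_of_nonneg_left h2 hrpos.le]

-- pointwise log bound
lemma key_log (x : ℝ) (hx : 1 < x) :
    1 / x ≤ Real.log x - Real.log (x - 1) := by
  have h0 : (0:ℝ) < x := by linarith
  have h1 : (0:ℝ) < x - 1 := by linarith
  have h := Real.log_le_sub_one_of_pos (show (0:ℝ) < (x-1)/x by positivity)
  rw [Real.log_div (by linarith) (by linarith)] at h
  have h2 : (x - 1) / x - 1 = -(1/x) := by field_simp; ring
  rw [h2] at h
  linarith

/-- Bound (eq:Sig) on the accumulated dispersion-amplification factor `Σ_t`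
of Proposition 1 (scaled form, step size `η_ℓ = γ/(ℓ+α)`). -/
theorem sigma_bound (a t : ℕ) (hat : a ≤ t)
    (α γ : ℝ) (hα : 1 < α) (hγ : 1 < γ) :
    ∑ ℓ ∈ Finset.Ico a t,
        (γ / ((ℓ : ℝ) + α)) * ∏ j ∈ Finset.Ico (ℓ + 1) t, (1 + 2 * γ / ((j : ℝ) + α))
      ≤ 2 * γ * Real.sqrt (((t : ℝ) - (a : ℝ)) / ((a : ℝ) + α)) *
          (1 + ((t : ℝ) - (a : ℝ)) / ((a : ℝ) + α - 1)) ^ (2 * γ) := by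
  have ha0 : (0:ℝ) ≤ a := Nat.cast_nonneg a
  have hA : (1:ℝ) < (a:ℝ) + α := by linarith
  set n := t - a with hn
  have htn : (t : ℝ) - (a : ℝ) = (n : ℝ) := by
    rw [hn, Nat.cast_sub hat]
  rw [htn]
  set A := (a:ℝ) + α with hAdef
  set B := 1 + (n : ℝ) / ((a:ℝ) + α - 1) with hBdef
  have hden : (0:ℝ) < (a:ℝ) + α - 1 := by linarith
  have hB0 : (0:ℝ) < B := by
    have h1 : (0:ℝ) ≤ (n : ℝ) / ((a:ℝ) + α - 1) :=
      div_nonneg (Nat.cast_nonneg n) hden.le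
    rw [hBdef]
    linarith
  set P := ∏ j ∈ Finset.Ico a t, (1 + 2 * γ / ((j : ℝ) + α)) with hPdef
  set S := ∑ ℓ ∈ Finset.Ico a t, γ / ((ℓ : ℝ) + α) with hSdef
  have hfpos : ∀ j : ℕ, (0:ℝ) < 1 + 2 * γ / ((j : ℝ) + α) := by
    intro j
    have h1 : (0:ℝ) < (j:ℝ) + α := by positivity
    have h2 : 0 < 2 * γ / ((j : ℝ) + α) := by positivity
    linarith
  -- Step A : LHS ≤ S * P
  have stepA : ∑ ℓ ∈ Finset.Ico a t,
        (γ / ((ℓ : ℝ) + α)) * ∏ j ∈ Finset.Ico (ℓ + 1) t, (1 + 2 * γ / ((j : ℝ) + α))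
      ≤ S * P := by
    rw [hSdef, Finset.sum_mul]
    apply Finset.sum_le_sum
    intro ℓ hℓ
    rw [Finset.mem_Ico] at hℓ
    have hγℓ : (0:ℝ) ≤ γ / ((ℓ:ℝ) + α) := by positivity
    apply mul_le_mul_of_nonneg_left _ hγℓ
    rw [hPdef]
    have hsplit := Finset.prod_Ico_consecutive (fun j : ℕ => 1 + 2 * γ / ((j : ℝ) + α))
      (Nat.le_succ_of_le hℓ.1) hℓ.2
    rw [← hsplit]
    have hone : (1:ℝ) ≤ ∏ j ∈ Finset.Ico a (ℓ + 1), (1 + 2 * γ / ((j : ℝ) + α)) := by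
      calc (1:ℝ) = ∏ _j ∈ Finset.Ico a (ℓ + 1), (1:ℝ) := (Finset.prod_const_one).symm
        _ ≤ ∏ j ∈ Finset.Ico a (ℓ + 1), (1 + 2 * γ / ((j : ℝ) + α)) := by
            apply Finset.prod_le_prod
            · intro i _; norm_num
            · intro i _
              have h2 : 0 < 2 * γ / ((i : ℝ) + α) := by positivity
              linarith
    exact le_mul_of_one_le_left
      (Finset.prod_nonneg fun j _ => (hfpos j).le) hone
  -- Step B : S ≤ 2γ √(n/A)
  have stepB : S ≤ 2 * γ * Real.sqrt ((n:ℝ) / A) := by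
    have hr : Real.sqrt ((n:ℝ) / A) = Real.sqrt (n:ℝ) / Real.sqrt A :=
      Real.sqrt_div (Nat.cast_nonneg n) A
    rw [hSdef, Finset.sum_Ico_eq_sum_range]
    have hs : ∑ k ∈ Finset.range (t - a), γ / (((a + k : ℕ) : ℝ) + α)
        ≤ ∑ k ∈ Finset.range (t - a),
            γ * ((2 / Real.sqrt A) * (Real.sqrt ((k:ℝ) + 1) - Real.sqrt (k:ℝ))) := by
      apply Finset.sum_le_sum
      intro k _
      push_cast
      have hk := key_sqrt A hA.le k
      have he : γ / ((a:ℝ) + (k:ℝ) + α) = γ * (1 / (A + k)) := by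
        rw [hAdef]; ring
      rw [he]
      exact mul_le_mul_of_nonneg_left hk (by linarith)
    refine hs.trans ?_
    rw [← Finset.mul_sum]
    have htel : ∑ k ∈ Finset.range (t - a),
          ((2 / Real.sqrt A) * (Real.sqrt ((k:ℝ) + 1) - Real.sqrt (k:ℝ)))
        = (2 / Real.sqrt A) * Real.sqrt ((t - a : ℕ) : ℝ) := by
      rw [← Finset.mul_sum]
      congr 1
      have := Finset.sum_range_sub (fun k : ℕ => Real.sqrt (k:ℝ)) (t - a)
      simpa using this
    rw [htel, hr, hn]
    exact le_of_eq (by ring)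
  -- Step C : P ≤ B ^ (2γ)
  have stepC : P ≤ B ^ (2 * γ) := by
    have hC1 : P ≤ Real.exp (∑ j ∈ Finset.Ico a t, 2 * γ / ((j : ℝ) + α)) := by
      rw [hPdef]
      calc ∏ j ∈ Finset.Ico a t, (1 + 2 * γ / ((j : ℝ) + α))
          ≤ ∏ j ∈ Finset.Ico a t, Real.exp (2 * γ / ((j : ℝ) + α)) := by
            apply Finset.prod_le_prod
            · intro j _; exact (hfpos j).le
            · intro j _
              have := Real.add_one_le_exp (2 * γ / ((j : ℝ) + α))
              linarith
        _ = Real.exp (∑ j ∈ Finset.Ico a t, 2 * γ / ((j : ℝ) + α)) :=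
            (Real.exp_sum _ _).symm
    have hC2 : ∑ j ∈ Finset.Ico a t, 2 * γ / ((j : ℝ) + α) ≤ 2 * γ * Real.log B := by
      have hlog : ∑ j ∈ Finset.Ico a t, 1 / ((j : ℝ) + α) ≤ Real.log B := by
        have hta : (a:ℝ) ≤ (t:ℝ) := Nat.cast_le.mpr hat
        have hnum : (0:ℝ) < (t:ℝ) + α - 1 := by linarith
        have hBe : B = ((t:ℝ) + α - 1) / ((a:ℝ) + α - 1) := by
          rw [hBdef, ← htn]
          field_simp
          ring
        have hsum : ∑ j ∈ Finset.Ico a t, 1 / ((j : ℝ) + α)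
            ≤ ∑ k ∈ Finset.range (t - a),
                (Real.log ((a:ℝ) + ((k + 1 : ℕ) : ℝ) + α - 1)
                  - Real.log ((a:ℝ) + ((k : ℕ) : ℝ) + α - 1)) := by
          rw [Finset.sum_Ico_eq_sum_range]
          apply Finset.sum_le_sum
          intro k _
          push_cast
          have h0k : (0:ℝ) ≤ (k:ℝ) := Nat.cast_nonneg k
          have hx : (1:ℝ) < (a:ℝ) + (k:ℝ) + α := by linarith
          have hkey := key_log ((a:ℝ) + (k:ℝ) + α) hx
          have he1 : (a:ℝ) + ((k:ℝ) + 1) + α - 1 = (a:ℝ) + (k:ℝ) + α := by ring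
          rw [he1]
          exact hkey
        refine hsum.trans ?_
        have htel := Finset.sum_range_sub
          (fun k : ℕ => Real.log ((a:ℝ) + ((k : ℕ) : ℝ) + α - 1)) (t - a)
        rw [htel, Nat.cast_sub hat]
        have e1 : (a:ℝ) + ((t:ℝ) - (a:ℝ)) + α - 1 = (t:ℝ) + α - 1 := by ring
        have e2 : (a:ℝ) + ((0 : ℕ) : ℝ) + α - 1 = (a:ℝ) + α - 1 := by
          push_cast; ring
        rw [e1, e2, hBe, Real.log_div (by linarith) (by linarith)]
      calc ∑ j ∈ Finset.Ico a t, 2 * γ / ((j : ℝ) + α)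
          = 2 * γ * ∑ j ∈ Finset.Ico a t, 1 / ((j : ℝ) + α) := by
            rw [Finset.mul_sum]; apply Finset.sum_congr rfl; intro j _; ring
        _ ≤ 2 * γ * Real.log B := by
            apply mul_le_mul_of_nonneg_left hlog (by linarith)
    calc P ≤ Real.exp (∑ j ∈ Finset.Ico a t, 2 * γ / ((j : ℝ) + α)) := hC1
      _ ≤ Real.exp (2 * γ * Real.log B) := Real.exp_le_exp.mpr hC2
      _ = B ^ (2 * γ) := by
          rw [Real.rpow_def_of_pos hB0, mul_comm]
  -- combine
  have hPnn : (0:ℝ) ≤ P := by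
    rw [hPdef]
    apply Finset.prod_nonneg
    intro j _; exact (hfpos j).le
  have hS'nn : (0:ℝ) ≤ 2 * γ * Real.sqrt ((n:ℝ) / A) := by positivity
  calc ∑ ℓ ∈ Finset.Ico a t,
        (γ / ((ℓ : ℝ) + α)) * ∏ j ∈ Finset.Ico (ℓ + 1) t, (1 + 2 * γ / ((j : ℝ) + α))
      ≤ S * P := stepA
    _ ≤ (2 * γ * Real.sqrt ((n:ℝ) / A)) * (B ^ (2 * γ)) :=
        mul_le_mul stepB stepC hPnn hS'nn
end

section
/- Let a ≤ t be natural numbers, let τ ≥ 1 be a natural number with t − a ≤ τ − 1, and let α, γ be real numbers with α > 1 and γ > 1. Define Σ = ∑_{ℓ=a}^{t−1} (γ/(ℓ + α)) ∏_{j=ℓ+1}^{t−1} (1 + 2γ/(j + α)). Then Σ² ≤ 4γ (τ − 1) ( 1 + (τ − 1)/α ) ( 1 + (τ − 1)/(α − 1) )^{4γ} · γ/(t + α), where (1 + (τ−1)/(α−1))^{4γ} uses the real power. -/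
set_option maxHeartbeats 1000000


open scoped BigOperators

private lemma prod_ratio_teles (α : ℝ) (hα : 0 < α) {m n : ℕ} (h : m ≤ n) :
    ∏ j ∈ Finset.Ico m n, (((j : ℝ) + 1 + α) / ((j : ℝ) + α))
      = ((n : ℝ) + α) / ((m : ℝ) + α) := by
  induction n, h using Nat.le_induction with
  | base =>
      rw [Finset.Ico_self, Finset.prod_empty, div_self (by positivity)]
  | succ n hmn ih =>
      rw [Finset.prod_Ico_succ_top hmn, ih]
      have h1 : ((n : ℝ) + α) ≠ 0 := by positivity
      have h2 : ((m : ℝ) + α) ≠ 0 := by positivity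
      push_cast
      field_simp

private lemma sum_inv_teles (α : ℝ) (hα : 0 < α) {m n : ℕ} (h : m ≤ n) :
    ∑ ℓ ∈ Finset.Ico m n, (1 / ((ℓ : ℝ) + α) - 1 / ((ℓ : ℝ) + 1 + α))
      = 1 / ((m : ℝ) + α) - 1 / ((n : ℝ) + α) := by
  induction n, h using Nat.le_induction with
  | base => rw [Finset.Ico_self, Finset.sum_empty]; ring
  | succ n hmn ih =>
      rw [Finset.sum_Ico_succ_top hmn, ih]
      push_cast
      ring

/-- Bound (eq:Sigma_2ndP) in the proof of Theorem 2: with `t − a ≤ τ − 1`,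
the square of the accumulated amplification factor `Σ` is `O(γ/(t+α))` with a
constant depending on `τ`, `α` and `γ`. -/
theorem sigma_sq_bound (a t τ : ℕ) (hat : a ≤ t)
    (hτ : 1 ≤ τ) (htτ : t - a ≤ τ - 1)
    (α γ : ℝ) (hα : 1 < α) (hγ : 1 < γ) :
    (∑ ℓ ∈ Finset.Ico a t,
        (γ / ((ℓ : ℝ) + α)) * ∏ j ∈ Finset.Ico (ℓ + 1) t, (1 + 2 * γ / ((j : ℝ) + α))) ^ 2
      ≤ 4 * γ * ((τ : ℝ) - 1) * (1 + ((τ : ℝ) - 1) / α) *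
          (1 + ((τ : ℝ) - 1) / (α - 1)) ^ (4 * γ) * (γ / ((t : ℝ) + α)) := by
  have hα0 : (0:ℝ) < α := by linarith
  have ha0 : (0:ℝ) ≤ (a:ℝ) := Nat.cast_nonneg a
  have htα : (0:ℝ) < (t:ℝ) + α := by positivity
  have haα : (0:ℝ) < (a:ℝ) + α := by positivity
  set T : ℝ := (τ : ℝ) - 1 with hTdef
  have hT0 : 0 ≤ T := by
    have : (1:ℝ) ≤ (τ:ℝ) := by exact_mod_cast hτ
    simp only [hTdef]; linarith
  have hd : (t:ℝ) - (a:ℝ) ≤ T := by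
    have h1 : ((t - a : ℕ) : ℝ) ≤ ((τ - 1 : ℕ) : ℝ) := Nat.cast_le.mpr htτ
    rw [Nat.cast_sub hat, Nat.cast_sub hτ] at h1
    simpa [hTdef] using h1
  have hd0 : (0:ℝ) ≤ (t:ℝ) - (a:ℝ) := by
    have : (a:ℝ) ≤ (t:ℝ) := Nat.cast_le.mpr hat
    linarith
  set B : ℝ := 1 + T / (α - 1) with hBdef
  have hB1 : (1:ℝ) ≤ B := by
    have : 0 ≤ T / (α - 1) := div_nonneg hT0 (by linarith)
    simp only [hBdef]; linarith
  have hB0 : (0:ℝ) < B := by linarith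
  have hγ1 : (1:ℝ) ≤ 2 * γ - 1 := by linarith
  set d : ℝ := (t:ℝ) - (a:ℝ) with hddef
  set K : ℝ := γ * B ^ (2 * γ - 1) * (d / ((a:ℝ) + α)) with hKdef
  -- per-term bound
  have key : ∀ ℓ ∈ Finset.Ico a t,
      (γ / ((ℓ : ℝ) + α)) * ∏ j ∈ Finset.Ico (ℓ + 1) t, (1 + 2 * γ / ((j : ℝ) + α))
        ≤ (γ * B ^ (2 * γ - 1) * ((t:ℝ) + α)) *
            (1 / ((ℓ:ℝ) + α) - 1 / ((ℓ:ℝ) + 1 + α)) := by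
    intro ℓ hℓ
    obtain ⟨hal, hlt⟩ := Finset.mem_Ico.mp hℓ
    have hlα : (0:ℝ) < (ℓ:ℝ) + α := by positivity
    have hl1α : (0:ℝ) < (ℓ:ℝ) + 1 + α := by positivity
    set r : ℝ := ((t:ℝ) + α) / ((ℓ:ℝ) + 1 + α) with hrdef
    have hl1t : (ℓ:ℝ) + 1 ≤ (t:ℝ) := by exact_mod_cast hlt
    have hr1 : 1 ≤ r := by
      rw [hrdef, le_div_iff₀ hl1α]; linarith
    have hr0 : (0:ℝ) < r := by linarith
    have haℓ : (a:ℝ) ≤ (ℓ:ℝ) := Nat.cast_le.mpr hal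
    have hrB : r ≤ B := by
      rw [hrdef, div_le_iff₀ hl1α]
      have h3 : T ≤ ((ℓ:ℝ) + 1 + α) * T / (α - 1) := by
        rw [le_div_iff₀ (by linarith)]
        nlinarith
      have h4 : B * ((ℓ:ℝ) + 1 + α)
          = ((ℓ:ℝ) + 1 + α) + ((ℓ:ℝ) + 1 + α) * T / (α - 1) := by
        have hne : α - 1 ≠ 0 := by linarith
        rw [hBdef]; field_simp
      rw [h4]
      linarith
    have hP : ∏ j ∈ Finset.Ico (ℓ + 1) t, (1 + 2 * γ / ((j : ℝ) + α))
        ≤ B ^ (2 * γ - 1) * r := by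
      have step1 : ∏ j ∈ Finset.Ico (ℓ + 1) t, (1 + 2 * γ / ((j : ℝ) + α))
          ≤ ∏ j ∈ Finset.Ico (ℓ + 1) t, (1 + 1 / ((j : ℝ) + α)) ^ (2 * γ) := by
        apply Finset.prod_le_prod
        · intro j _; positivity
        · intro j _
          have hj : (0:ℝ) < (j:ℝ) + α := by positivity
          have hs : (-1:ℝ) ≤ 1 / ((j:ℝ) + α) := by
            have : (0:ℝ) ≤ 1 / ((j:ℝ) + α) := by positivity
            linarith
          have := one_add_mul_self_le_rpow_one_add hs (by linarith : (1:ℝ) ≤ 2 * γ)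
          calc 1 + 2 * γ / ((j:ℝ) + α) = 1 + 2 * γ * (1 / ((j:ℝ) + α)) := by ring
            _ ≤ (1 + 1 / ((j:ℝ) + α)) ^ (2 * γ) := this
      have step2 : ∏ j ∈ Finset.Ico (ℓ + 1) t, (1 + 1 / ((j : ℝ) + α)) ^ (2 * γ)
          = r ^ (2 * γ) := by
        rw [Real.finset_prod_rpow _ _ (fun j _ => by positivity) _]
        congr 1
        have : ∀ j ∈ Finset.Ico (ℓ + 1) t,
            (1 + 1 / ((j : ℝ) + α)) = ((j:ℝ) + 1 + α) / ((j:ℝ) + α) := by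
          intro j _
          have hj : (0:ℝ) < (j:ℝ) + α := by positivity
          field_simp
          ring
        rw [Finset.prod_congr rfl this, prod_ratio_teles α hα0 hlt, hrdef]
        push_cast
        ring_nf
      have step3 : r ^ (2 * γ) ≤ B ^ (2 * γ - 1) * r := by
        have hsplit : r ^ (2 * γ) = r ^ (2 * γ - 1) * r := by
          have h := Real.rpow_add hr0 (2 * γ - 1) 1
          rw [Real.rpow_one] at h
          rw [show 2 * γ - 1 + 1 = 2 * γ by ring] at h
          exact h
        rw [hsplit]
        have := Real.rpow_le_rpow hr0.le hrB (by linarith : (0:ℝ) ≤ 2 * γ - 1)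
        exact mul_le_mul_of_nonneg_right this hr0.le
      calc _ ≤ _ := step1
        _ = r ^ (2 * γ) := step2
        _ ≤ B ^ (2 * γ - 1) * r := step3
    have hcoef : (0:ℝ) ≤ γ / ((ℓ:ℝ) + α) := by positivity
    calc (γ / ((ℓ : ℝ) + α)) * ∏ j ∈ Finset.Ico (ℓ + 1) t, (1 + 2 * γ / ((j : ℝ) + α))
        ≤ (γ / ((ℓ : ℝ) + α)) * (B ^ (2 * γ - 1) * r) :=
          mul_le_mul_of_nonneg_left hP hcoef
      _ = (γ * B ^ (2 * γ - 1) * ((t:ℝ) + α)) *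
            (1 / ((ℓ:ℝ) + α) - 1 / ((ℓ:ℝ) + 1 + α)) := by
          rw [hrdef]; field_simp; ring
  -- sum bound
  have hS0 : 0 ≤ ∑ ℓ ∈ Finset.Ico a t,
      (γ / ((ℓ : ℝ) + α)) * ∏ j ∈ Finset.Ico (ℓ + 1) t, (1 + 2 * γ / ((j : ℝ) + α)) := by
    apply Finset.sum_nonneg
    intro ℓ _
    have h1 : (0:ℝ) ≤ γ / ((ℓ:ℝ) + α) := by positivity
    have h2 : (0:ℝ) ≤ ∏ j ∈ Finset.Ico (ℓ + 1) t, (1 + 2 * γ / ((j : ℝ) + α)) :=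
      Finset.prod_nonneg fun j _ => by positivity
    exact mul_nonneg h1 h2
  have hSK : (∑ ℓ ∈ Finset.Ico a t,
      (γ / ((ℓ : ℝ) + α)) * ∏ j ∈ Finset.Ico (ℓ + 1) t, (1 + 2 * γ / ((j : ℝ) + α))) ≤ K := by
    calc (∑ ℓ ∈ Finset.Ico a t,
        (γ / ((ℓ : ℝ) + α)) * ∏ j ∈ Finset.Ico (ℓ + 1) t, (1 + 2 * γ / ((j : ℝ) + α)))
        ≤ ∑ ℓ ∈ Finset.Ico a t, (γ * B ^ (2 * γ - 1) * ((t:ℝ) + α)) *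
            (1 / ((ℓ:ℝ) + α) - 1 / ((ℓ:ℝ) + 1 + α)) := Finset.sum_le_sum key
      _ = (γ * B ^ (2 * γ - 1) * ((t:ℝ) + α)) *
            ∑ ℓ ∈ Finset.Ico a t, (1 / ((ℓ:ℝ) + α) - 1 / ((ℓ:ℝ) + 1 + α)) := by
          rw [Finset.mul_sum]
      _ = (γ * B ^ (2 * γ - 1) * ((t:ℝ) + α)) *
            (1 / ((a:ℝ) + α) - 1 / ((t:ℝ) + α)) := by
          rw [sum_inv_teles α hα0 hat]
      _ = K := by
          rw [hKdef, hddef]; field_simp; ring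
  have hK0 : 0 ≤ K := by
    rw [hKdef]
    have : (0:ℝ) ≤ B ^ (2 * γ - 1) := (Real.rpow_pos_of_pos hB0 _).le
    have hγ0 : (0:ℝ) ≤ γ := by linarith
    positivity
  -- square
  have hsq : (∑ ℓ ∈ Finset.Ico a t,
      (γ / ((ℓ : ℝ) + α)) * ∏ j ∈ Finset.Ico (ℓ + 1) t, (1 + 2 * γ / ((j : ℝ) + α))) ^ 2
      ≤ K ^ 2 := pow_le_pow_left₀ hS0 hSK 2
  -- arithmetic on K^2
  have hQ : (B ^ (2 * γ - 1)) ^ 2 = B ^ (4 * γ - 2) := by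
    rw [sq, ← Real.rpow_add hB0]; ring_nf
  have hB4 : B ^ (4 * γ) = B ^ (4 * γ - 2) * B ^ 2 := by
    have h2 : B ^ (2:ℝ) = B ^ (2:ℕ) := by
      rw [show ((2:ℝ) = ((2:ℕ):ℝ)) by norm_num, Real.rpow_natCast]
    rw [← h2, ← Real.rpow_add hB0]; ring_nf
  -- core inequality
  have e1 : (t:ℝ) + α ≤ (1 + T / α) * ((a:ℝ) + α) := by
    have h5 : T ≤ T * ((a:ℝ) + α) / α := by
      rw [le_div_iff₀ hα0]; nlinarith
    have h6 : (1 + T / α) * ((a:ℝ) + α) = (a:ℝ) + α + T * ((a:ℝ) + α) / α := by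
      field_simp
    rw [h6]; linarith
  have e2 : d ≤ B ^ 2 * ((a:ℝ) + α) := by
    have hTB : T ≤ B * α := by
      have h7 : T ≤ T * α / (α - 1) := by
        rw [le_div_iff₀ (by linarith)]; nlinarith
      have h8 : B * α = α + T * α / (α - 1) := by
        have hne : α - 1 ≠ 0 := by linarith
        rw [hBdef]; field_simp
      rw [h8]; linarith
    have h9 : B * α ≤ B * ((a:ℝ) + α) := by nlinarith
    have h10 : B * ((a:ℝ) + α) ≤ B ^ 2 * ((a:ℝ) + α) := by nlinarith
    calc d ≤ T := hd
      _ ≤ B * α := hTB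
      _ ≤ B * ((a:ℝ) + α) := h9
      _ ≤ B ^ 2 * ((a:ℝ) + α) := h10
  have core : d ^ 2 * ((t:ℝ) + α) ≤ 4 * T * (1 + T / α) * B ^ 2 * ((a:ℝ) + α) ^ 2 := by
    have c1 : d * ((t:ℝ) + α) ≤ (B ^ 2 * ((a:ℝ) + α)) * ((1 + T / α) * ((a:ℝ) + α)) := by
      apply mul_le_mul e2 e1 htα.le
      positivity
    have c2 : d ^ 2 * ((t:ℝ) + α) ≤ T * (d * ((t:ℝ) + α)) := by
      nlinarith [mul_nonneg (mul_nonneg (sub_nonneg.mpr hd) hd0) htα.le]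
    have c3 : T * (d * ((t:ℝ) + α))
        ≤ T * ((B ^ 2 * ((a:ℝ) + α)) * ((1 + T / α) * ((a:ℝ) + α))) :=
      mul_le_mul_of_nonneg_left c1 hT0
    have hpn : (0:ℝ) ≤ T * (B ^ 2 * ((a:ℝ) + α) * ((1 + T / α) * ((a:ℝ) + α))) := by positivity
    have hre : 4 * T * (1 + T / α) * B ^ 2 * ((a:ℝ) + α) ^ 2
        = 4 * (T * (B ^ 2 * ((a:ℝ) + α) * ((1 + T / α) * ((a:ℝ) + α)))) := by ring
    rw [hre]
    have c4 : T * (B ^ 2 * ((a:ℝ) + α) * ((1 + T / α) * ((a:ℝ) + α)))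
        ≤ 4 * (T * (B ^ 2 * ((a:ℝ) + α) * ((1 + T / α) * ((a:ℝ) + α)))) := by linarith
    exact le_trans (le_trans c2 c3) c4
  have hfrac : d ^ 2 / ((a:ℝ) + α) ^ 2 ≤ 4 * T * (1 + T / α) * B ^ 2 / ((t:ℝ) + α) := by
    rw [div_le_div_iff₀ (by positivity) htα]
    nlinarith [core]
  have hQpos : (0:ℝ) < B ^ (4 * γ - 2) := Real.rpow_pos_of_pos hB0 _
  have hK2 : K ^ 2 = γ ^ 2 * B ^ (4 * γ - 2) * (d ^ 2 / ((a:ℝ) + α) ^ 2) := by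
    rw [hKdef, mul_pow, mul_pow, div_pow, hQ]
  have hRHS : 4 * γ * T * (1 + T / α) * B ^ (4 * γ) * (γ / ((t:ℝ) + α))
      = γ ^ 2 * B ^ (4 * γ - 2) * (4 * T * (1 + T / α) * B ^ 2 / ((t:ℝ) + α)) := by
    rw [hB4]; field_simp
  calc (∑ ℓ ∈ Finset.Ico a t,
      (γ / ((ℓ : ℝ) + α)) * ∏ j ∈ Finset.Ico (ℓ + 1) t, (1 + 2 * γ / ((j : ℝ) + α))) ^ 2
      ≤ K ^ 2 := hsq
    _ = γ ^ 2 * B ^ (4 * γ - 2) * (d ^ 2 / ((a:ℝ) + α) ^ 2) := hK2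
    _ ≤ γ ^ 2 * B ^ (4 * γ - 2) * (4 * T * (1 + T / α) * B ^ 2 / ((t:ℝ) + α)) := by
        apply mul_le_mul_of_nonneg_left hfrac
        positivity
    _ = 4 * γ * T * (1 + T / α) * B ^ (4 * γ) * (γ / ((t:ℝ) + α)) := hRHS.symm
end
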